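/- arXiv:1811.01177 — 2 statements merged into one kernel-verified Lean document; each statement's English description precedes it below -/
import Mathlib

section
/- Let P be an arbitrary subset of the Euclidean plane ℝ², let 0 ≤ s < t, and let k be a natural number. Suppose some finite set of size k guards P + closedBall(0, s), and every finite set guarding P + closedBall(0, t) has size at least k. Then there exists a set G' of size exactly k, contained in the grid wℤ² with w = √2·(t − s), such that G' guards P + closedBall(0, t); in particular, the grid of width √2·(t − s) contains a minimum-cardinality guard set of P + closedBall(0, t). -/
/-!
Round every guard of a guard set `G` of `P + B(s)` of size `k` to the nearest point of the
grid of width `w = √2 (t - s)`; this moves it by at most `w / √2 = t - s`. A point `q + u` of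
`P + B(t) = (P + B(s)) + B(t - s)`, with `q ∈ P + B(s)`, is seen by the rounded guard: the
segment from it to `q + u` lies within distance `t - s` of the segment from the original guard
to `q`, which lies in `P + B(s)`. Rounding cannot increase the number of guards, and optimality
for `P + B(t)` prevents it from decreasing.
-/

open Pointwise

/-- A set of guards `G` guards a region `P` if every point of `P` is seen by some guard,
i.e. the closed segment from the guard to the point lies inside `P`. -/
def Guards (G P : Set (EuclideanSpace ℝ (Fin 2))) : Prop :=
  ∀ p ∈ P, ∃ g ∈ G, segment ℝ g p ⊆ P

/-- The grid of width `w` in the Euclidean plane. -/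
def grid (w : ℝ) : Set (EuclideanSpace ℝ (Fin 2)) :=
  {x | ∃ a b : ℤ, x 0 = w * a ∧ x 1 = w * b}

open Metric Set

theorem segment_subset_segment_add_closedBall {E : Type*} [SeminormedAddCommGroup E]
    [NormedSpace ℝ E] {g g' p p' : E} {d : ℝ} (hg : ‖g' - g‖ ≤ d) (hp : ‖p' - p‖ ≤ d) :
    segment ℝ g' p' ⊆ segment ℝ g p + closedBall 0 d := by
  rintro _ ⟨a, b, ha, hb, hab, rfl⟩
  refine ⟨a • g + b • p, ⟨a, b, ha, hb, hab, rfl⟩, a • (g' - g) + b • (p' - p), ?_, by module⟩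
  exact convex_closedBall 0 d (mem_closedBall_zero_iff.2 hg) (mem_closedBall_zero_iff.2 hp)
    ha hb hab

theorem Guards.image_add_closedBall {G Q : Set (EuclideanSpace ℝ (Fin 2))} (hG : Guards G Q)
    {f : EuclideanSpace ℝ (Fin 2) → EuclideanSpace ℝ (Fin 2)} {d : ℝ}
    (hf : ∀ g ∈ G, ‖f g - g‖ ≤ d) : Guards (f '' G) (Q + closedBall 0 d) := by
  rintro _ ⟨q, hq, u, hu, rfl⟩
  obtain ⟨g, hgG, hseg⟩ := hG q hq
  refine ⟨f g, mem_image_of_mem f hgG, ?_⟩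
  calc segment ℝ (f g) (q + u) ⊆ segment ℝ g q + closedBall 0 d :=
        segment_subset_segment_add_closedBall (hf g hgG) (by simpa using hu)
    _ ⊆ Q + closedBall 0 d := add_subset_add_right hseg

theorem abs_mul_round_div_sub_le {w : ℝ} (hw : 0 < w) (a : ℝ) :
    |w * round (a / w) - a| ≤ w / 2 := by
  have h := abs_sub_round (a / w)
  rw [abs_sub_comm] at h
  calc |w * round (a / w) - a| = w * |round (a / w) - a / w| := by
        rw [← abs_of_pos hw, ← abs_mul, abs_of_pos hw, mul_sub, mul_div_cancel₀ _ hw.ne']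
    _ ≤ w * (1 / 2) := mul_le_mul_of_nonneg_left h hw.le
    _ = w / 2 := by ring

noncomputable def gridRound (w : ℝ) (x : EuclideanSpace ℝ (Fin 2)) : EuclideanSpace ℝ (Fin 2) :=
  WithLp.toLp 2 fun i => w * round (x i / w)

theorem gridRound_mem_grid (w : ℝ) (x : EuclideanSpace ℝ (Fin 2)) : gridRound w x ∈ grid w :=
  ⟨round (x 0 / w), round (x 1 / w), rfl, rfl⟩

theorem norm_gridRound_sub_le {w : ℝ} (hw : 0 < w) (x : EuclideanSpace ℝ (Fin 2)) :
    ‖gridRound w x - x‖ ≤ w / √2 := by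
  have hcoord (i : Fin 2) : (gridRound w x i - x i) ^ 2 ≤ (w / 2) ^ 2 :=
    sq_le_sq.2 ((abs_mul_round_div_sub_le hw (x i)).trans (le_abs_self _))
  refine (pow_le_pow_iff_left₀ (norm_nonneg _) (by positivity) two_ne_zero).1 ?_
  calc ‖gridRound w x - x‖ ^ 2 = (gridRound w x 0 - x 0) ^ 2 + (gridRound w x 1 - x 1) ^ 2 := by
        simp [EuclideanSpace.real_norm_sq_eq, Fin.sum_univ_two]
    _ ≤ (w / 2) ^ 2 + (w / 2) ^ 2 := add_le_add (hcoord 0) (hcoord 1)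
    _ = (w / √2) ^ 2 := by rw [div_pow w √2, Real.sq_sqrt zero_le_two]; ring

theorem grid_contains_optimal_guard_set
    (P : Set (EuclideanSpace ℝ (Fin 2))) (s t : ℝ) (hs : 0 ≤ s) (hst : s < t) (k : ℕ)
    (hexists : ∃ G : Set (EuclideanSpace ℝ (Fin 2)), G.Finite ∧ Nat.card G = k ∧
      Guards G (P + Metric.closedBall (0 : EuclideanSpace ℝ (Fin 2)) s))
    (hopt : ∀ G : Set (EuclideanSpace ℝ (Fin 2)), G.Finite →
      Guards G (P + Metric.closedBall (0 : EuclideanSpace ℝ (Fin 2)) t) → k ≤ Nat.card G) :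
    ∃ G' : Set (EuclideanSpace ℝ (Fin 2)), G'.Finite ∧ Nat.card G' = k ∧
      G' ⊆ grid (Real.sqrt 2 * (t - s)) ∧
      Guards G' (P + Metric.closedBall (0 : EuclideanSpace ℝ (Fin 2)) t) := by
  obtain ⟨G, hGfin, rfl, hG⟩ := hexists
  have hts : 0 < t - s := sub_pos.2 hst
  set w := √2 * (t - s)
  have hround (g) (_ : g ∈ G) : ‖gridRound w g - g‖ ≤ t - s := by
    simpa [w] using norm_gridRound_sub_le (mul_pos (Real.sqrt_pos.2 two_pos) hts) g
  have hguards : Guards (gridRound w '' G) (P + closedBall 0 t) := by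
    have h := hG.image_add_closedBall hround
    rwa [add_assoc, closedBall_add_closedBall hs hts.le, add_zero, add_sub_cancel] at h
  refine ⟨_, hGfin.image _, ?_, image_subset_iff.2 fun g _ => gridRound_mem_grid w g, hguards⟩
  exact (Nat.card_image_le hGfin).antisymm (hopt _ (hGfin.image _) hguards)
end

section
/- Let ℓ ≥ 1 be a natural number, let δ > 0 and L ≥ e·δ (where e is Euler's number), and let 0 = t₀ ≤ t₁ ≤ … ≤ t_ℓ = δ be real numbers. Then (1/δ)·Σ_{i=1}^{ℓ} ∫_{t_{i−1}}^{t_i} (log(L/(s − t_{i−1})))² ds ≤ (log(L·ℓ/δ))² + 2·log(L·ℓ/δ) + 2, where log denotes the natural logarithm and each integral is over s ∈ (t_{i−1}, t_i]. -/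
/-!
Write `H x = x (log² x - 2 log x + 2)`, a primitive of `log² x` that is continuous at `0`.
Substituting `s = L y` turns the `i`-th integral into `L · H(aᵢ / L)`, where `aᵢ = tᵢ₊₁ - tᵢ`.
Since `H' = log²` decreases on `(0, 1)`, `H` is concave on `[0, 1]`; the `aᵢ / L` lie there
because `aᵢ ≤ δ ≤ L`. Jensen's inequality for the average of the `aᵢ`, which is `δ / ℓ`, bounds
the sum by `L ℓ H(δ / (L ℓ))`, and this is exactly `δ (v² + 2v + 2)` with `v = log (L ℓ / δ)`.
-/

open Real Set MeasureTheory intervalIntegral Finset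

noncomputable def logSqPrimitive (x : ℝ) : ℝ := x * (log x ^ 2 - 2 * log x + 2)

lemma hasDerivAt_logSqPrimitive {x : ℝ} (hx : x ≠ 0) :
    HasDerivAt logSqPrimitive (log x ^ 2) x := by
  have hlog := hasDerivAt_log hx
  refine ((hasDerivAt_id' x).fun_mul
    (((hlog.fun_pow 2).fun_sub (hlog.const_mul 2)).add_const 2)).congr_deriv ?_
  field_simp
  ring

lemma continuousOn_logSqPrimitive : ContinuousOn logSqPrimitive (Ici 0) := by
  -- `x log² x = (2 √x log √x)²` on `[0, ∞)`, and `y log y` is continuous at `0`.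
  have hcont : Continuous fun x => (2 * (√x * log √x)) ^ 2 - 2 * (x * log x) + 2 * x :=
    (((continuous_mul_log.comp continuous_sqrt).const_mul 2).pow 2).sub
      (continuous_mul_log.const_mul 2) |>.add (continuous_id.const_mul 2)
  refine hcont.continuousOn.congr fun x (hx : 0 ≤ x) => ?_
  simp only [logSqPrimitive, log_sqrt hx]
  rw [mul_pow, mul_pow, sq_sqrt hx]
  ring

lemma integral_log_sq {b : ℝ} (hb : 0 ≤ b) : ∫ x in 0..b, log x ^ 2 = logSqPrimitive b := by
  have hcont : ContinuousOn logSqPrimitive (Icc 0 b) :=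
    continuousOn_logSqPrimitive.mono Set.Icc_subset_Ici_self
  have hderiv : ∀ x ∈ Ioo 0 b, HasDerivAt logSqPrimitive (log x ^ 2) x :=
    fun x hx => hasDerivAt_logSqPrimitive hx.1.ne'
  have hint : IntervalIntegrable (fun x => log x ^ 2) volume 0 b :=
    (intervalIntegrable_iff_integrableOn_Ioc_of_le hb).2
      (integrableOn_deriv_of_nonneg hcont hderiv fun x _ => sq_nonneg _)
  rw [integral_eq_sub_of_hasDerivAt_of_le hb hcont hderiv hint]
  simp [logSqPrimitive]

lemma setIntegral_log_div_sub_sq {L b c : ℝ} (hL : 0 < L) (hbc : b ≤ c) :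
    ∫ s in Ioc b c, log (L / (s - b)) ^ 2 = L * logSqPrimitive ((c - b) / L) := by
  have hsymm : ∀ s, log (L / s) ^ 2 = log (s / L) ^ 2 := fun s => by
    rw [← inv_div, log_inv, neg_sq]
  rw [← integral_of_le hbc, integral_comp_sub_right (fun s => log (L / s) ^ 2), sub_self]
  simp_rw [hsymm]
  rw [integral_comp_div (fun y => log y ^ 2) hL.ne', zero_div,
    integral_log_sq (div_nonneg (sub_nonneg.2 hbc) hL.le), smul_eq_mul]

lemma concaveOn_logSqPrimitive : ConcaveOn ℝ (Icc 0 1) logSqPrimitive := by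
  refine AntitoneOn.concaveOn_of_deriv (convex_Icc 0 1)
    (continuousOn_logSqPrimitive.mono Set.Icc_subset_Ici_self) ?_ ?_ <;> rw [interior_Icc]
  · exact fun x hx => (hasDerivAt_logSqPrimitive hx.1.ne').differentiableAt.differentiableWithinAt
  · intro x hx y hy hxy
    rw [(hasDerivAt_logSqPrimitive hx.1.ne').deriv, (hasDerivAt_logSqPrimitive hy.1.ne').deriv]
    have hlog_le : log x ≤ log y := log_le_log hx.1 hxy
    have hlog_nonpos : log y ≤ 0 := log_nonpos hy.1.le hy.2.le
    nlinarith

lemma mul_logSqPrimitive_inv {x : ℝ} (hx : x ≠ 0) :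
    x * logSqPrimitive x⁻¹ = log x ^ 2 + 2 * log x + 2 := by
  rw [logSqPrimitive, log_inv]
  field_simp
  ring

lemma ConcaveOn.sum_le_card_mul_map_average {E : Type*} [AddCommGroup E] [Module ℝ E]
    {s : Set E} {f : E → ℝ} (hf : ConcaveOn ℝ s f) {ι : Type*} {t : Finset ι}
    (ht : t.Nonempty) {p : ι → E} (hp : ∀ i ∈ t, p i ∈ s) :
    ∑ i ∈ t, f (p i) ≤ #t * f ((#t : ℝ)⁻¹ • ∑ i ∈ t, p i) := by
  have hcard : (#t : ℝ) ≠ 0 := by exact_mod_cast ht.card_pos.ne'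
  have hjensen := hf.le_map_sum (w := fun _ => (#t : ℝ)⁻¹) (fun _ _ => by positivity)
    (by simp [hcard]) hp
  rw [← smul_sum, ← smul_sum, smul_eq_mul] at hjensen
  rwa [← inv_mul_le_iff₀ (by positivity)]

theorem expected_logsq_time_bound (ℓ : ℕ) (hℓ : 1 ≤ ℓ) (L δ : ℝ) (hδ : 0 < δ)
    (hL : Real.exp 1 * δ ≤ L)
    (t : ℕ → ℝ) (h0 : t 0 = 0) (hend : t ℓ = δ)
    (hmono : ∀ i < ℓ, t i ≤ t (i + 1)) :
    (1 / δ) * ∑ i ∈ Finset.range ℓ,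
        ∫ s in Set.Ioc (t i) (t (i + 1)), (Real.log (L / (s - t i))) ^ 2
      ≤ (Real.log (L * ℓ / δ)) ^ 2 + 2 * Real.log (L * ℓ / δ) + 2 := by
  have hδL : δ ≤ L := (le_mul_of_one_le_left hδ.le (one_le_exp zero_le_one)).trans hL
  have hL0 : 0 < L := hδ.trans_le hδL
  have hsum : ∑ i ∈ range ℓ, (t (i + 1) - t i) = δ := by
    rw [sum_range_sub, h0, hend, sub_zero]
  have hgap : ∀ i ∈ range ℓ, 0 ≤ t (i + 1) - t i := fun i hi =>
    sub_nonneg.2 (hmono i (mem_range.1 hi))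
  have hmem : ∀ i ∈ range ℓ, (t (i + 1) - t i) / L ∈ Set.Icc 0 1 := fun i hi =>
    ⟨div_nonneg (hgap i hi) hL0.le, (div_le_one hL0).2
      ((hsum ▸ single_le_sum hgap hi).trans hδL)⟩
  have hjensen := concaveOn_logSqPrimitive.sum_le_card_mul_map_average
    (nonempty_range_iff.2 (by lia)) hmem
  rw [card_range, ← sum_div, hsum, smul_eq_mul] at hjensen
  have hmean : (ℓ : ℝ)⁻¹ * (δ / L) = (L * ℓ / δ)⁻¹ := by
    field_simp
  rw [sum_congr rfl fun i hi => setIntegral_log_div_sub_sq hL0 (hmono i (mem_range.1 hi)),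
    ← mul_sum]
  calc 1 / δ * (L * ∑ i ∈ range ℓ, logSqPrimitive ((t (i + 1) - t i) / L))
      ≤ 1 / δ * (L * (ℓ * logSqPrimitive ((ℓ : ℝ)⁻¹ * (δ / L)))) := by gcongr
    _ = L * ℓ / δ * logSqPrimitive (L * ℓ / δ)⁻¹ := by
      rw [hmean]
      ring
    _ = _ := mul_logSqPrimitive_inv (by positivity)
end
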